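/- arXiv:0804.4268 — 2 statements merged into one kernel-verified Lean document; each statement's English description precedes it below -/
import Mathlib

section
/- For each positive integer n and any (real or rational) variable x, the sum over all binary trees T with n vertices of the product over all vertices v of T of (x + 1/h_v) equals (1/(n+1)!) * prod_{k=0}^{n-1} ((n+1+k)*x + n+1-k), where h_v is the hook length of v. -/
/-- A binary tree: `nil` is the empty tree, `node l r` is a vertex with
(possibly empty) left subtree `l` and right subtree `r`. -/
inductive BinTree where
  | nil : BinTree
  | node : BinTree → BinTree → BinTree

/-- Number of vertices of a binary tree. -/
def BinTree.size : BinTree → ℕ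
  | .nil => 0
  | .node l r => l.size + r.size + 1

/-- The multiset of hook lengths of the vertices of a binary tree
(the hook length of a vertex is the number of vertices of the subtree
rooted at it, including itself). -/
def BinTree.hooks : BinTree → Multiset ℕ
  | .nil => 0
  | .node l r => (BinTree.node l r).size ::ₘ (l.hooks + r.hooks)

/-!
Splitting a binary tree at its root shows that the hook sum `f n` satisfies `f 0 = 1` and
`f (n + 1) = (x + 1 / (n + 1)) * ∑_{i + j = n} f i * f j`, so it suffices to check that the
right-hand side `g n` satisfies the same recurrence.

For this, `g` is read off the Abel–Rothe polynomials
`A_k(t) = t / k! * ∏_{j=1}^{k-1} (t + k z - j w)`: with `z = 2x` and `w = x - 1` one has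
`A_{i+1}(1 - x) = (1 - x) g i`. These polynomials satisfy the convolution identity
`∑_{i + j = m} A_i(s) A_j(t) = A_m(s + t)`, because the difference of the two sides is a
polynomial in `s`, vanishing at `0`, that is `w`-periodic by the Pascal-type rule
`A_{k+1}(t + w) = A_{k+1}(t) + w A_k(t + z)`. The convolution at `s = t = 1 - x`, with the
two end terms evaluated by comparing `A_{n+2}(1 - x)` with `A_{n+2}(2 - 2x)`, gives the
recurrence for `g` when `x ≠ 1`, and continuity gives it at `x = 1`.
-/

open Finset Polynomial BinaryTree

theorem Polynomial.eq_C_eval_zero_of_periodic {R : Type*} [CommRing R] [IsDomain R] [CharZero R]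
    {p : R[X]} {c : R} (hp : Function.Periodic (fun t => p.eval t) c) (hc : c ≠ 0) :
    p = C (p.eval 0) := by
  refine eq_of_infinite_eval_eq _ _ (Set.infinite_of_injective_forall_mem
    (f := fun n : ℕ => (n : R) * c) (fun a b hab => ?_) fun n => ?_)
  · exact_mod_cast mul_right_cancel₀ hc hab
  · simpa using hp.nat_mul_eq n

section Rothe

variable {K : Type*} [Field K]

noncomputable def rothePoly (z w : K) : ℕ → K[X]
  | 0 => 1
  | k + 1 =>
    C ((k + 1).factorial : K)⁻¹ * X * ∏ j ∈ range k, (X + C ((k + 1) * z - (j + 1) * w))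

variable (z w : K)

theorem eval_rothePoly_zero (t : K) : (rothePoly z w 0).eval t = 1 := by
  simp [rothePoly]

theorem eval_rothePoly_succ (k : ℕ) (t : K) :
    (rothePoly z w (k + 1)).eval t
      = ((k + 1).factorial : K)⁻¹ * t *
          ∏ j ∈ range k, (t + ((k + 1) * z - (j + 1) * w)) := by
  simp [rothePoly, eval_prod]

theorem eval_rothePoly_sub_mul (k : ℕ) (t : K) :
    (t - w) * (t + (k + 1) * z - (k + 1) * w) * (rothePoly z w (k + 1)).eval t
      = t * (t + (k + 1) * z - w) * (rothePoly z w (k + 1)).eval (t - w) := by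
  cases k with
  | zero => simp only [eval_rothePoly_succ, prod_range_zero]; ring
  | succ m =>
    set c : ℕ → K := fun j => t + (m + 2) * z - j * w
    have h₁ : ∏ j ∈ range (m + 1), (t + ((((m + 1 : ℕ) : K) + 1) * z - (j + 1) * w))
        = (∏ j ∈ range m, c (j + 2)) * c 1 := by
      rw [prod_range_succ']
      congr 1
      · exact prod_congr rfl fun j _ => by simp only [c]; push_cast; ring
      · simp only [c]; push_cast; ring
    have h₂ : ∏ j ∈ range (m + 1), (t - w + ((((m + 1 : ℕ) : K) + 1) * z - (j + 1) * w))
        = (∏ j ∈ range m, c (j + 2)) * c (m + 2) := by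
      rw [prod_range_succ]
      congr 1
      · exact prod_congr rfl fun j _ => by simp only [c]; push_cast; ring
      · simp only [c]; push_cast; ring
    rw [eval_rothePoly_succ, eval_rothePoly_succ, h₁, h₂]
    simp only [c]
    push_cast
    ring

variable [CharZero K]

theorem eval_rothePoly_add (k : ℕ) (t : K) :
    (rothePoly z w (k + 1)).eval (t + w)
      = (rothePoly z w (k + 1)).eval t + w * (rothePoly z w k).eval (t + z) := by
  cases k with
  | zero => simp [eval_rothePoly_succ, eval_rothePoly_zero]
  | succ m =>
    set d : ℕ → K := fun j => t + (m + 2) * z - j * w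
    have h₁ : ∏ j ∈ range (m + 1), (t + w + ((((m + 1 : ℕ) : K) + 1) * z - (j + 1) * w))
        = (∏ j ∈ range m, d (j + 1)) * d 0 := by
      rw [prod_range_succ']
      congr 1
      · exact prod_congr rfl fun j _ => by simp only [d]; push_cast; ring
      · simp only [d]; push_cast; ring
    have h₂ : ∏ j ∈ range (m + 1), (t + ((((m + 1 : ℕ) : K) + 1) * z - (j + 1) * w))
        = (∏ j ∈ range m, d (j + 1)) * d (m + 1) := by
      rw [prod_range_succ]
      congr 1
      · exact prod_congr rfl fun j _ => by simp only [d]; push_cast; ring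
      · simp only [d]; push_cast; ring
    have h₃ : ∏ j ∈ range m, (t + z + (((m : K) + 1) * z - (j + 1) * w))
        = ∏ j ∈ range m, d (j + 1) :=
      prod_congr rfl fun j _ => by simp only [d]; push_cast; ring
    have hfact : ((m + 2).factorial : K) = (m + 2) * (m + 1).factorial := by
      push_cast [Nat.factorial_succ]; ring
    have : ((m + 1).factorial : K) ≠ 0 := Nat.cast_ne_zero.mpr (Nat.factorial_ne_zero _)
    have : (m + 2 : K) ≠ 0 := by exact_mod_cast (by omega : m + 2 ≠ 0)
    rw [eval_rothePoly_succ, eval_rothePoly_succ, eval_rothePoly_succ, h₁, h₂, h₃, hfact]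
    field_simp
    simp only [d]
    push_cast
    ring

theorem sum_antidiagonal_eval_rothePoly (hw : w ≠ 0) (m : ℕ) (s t : K) :
    ∑ p ∈ antidiagonal m, (rothePoly z w p.1).eval s * (rothePoly z w p.2).eval t
      = (rothePoly z w m).eval (s + t) := by
  induction m generalizing s with
  | zero => simp [eval_rothePoly_zero]
  | succ m ih =>
    set Q : K[X] :=
      ∑ p ∈ antidiagonal (m + 1), rothePoly z w p.1 * C ((rothePoly z w p.2).eval t)
        - (rothePoly z w (m + 1)).comp (X + C t)
    have hQ (s : K) : Q.eval s = ∑ p ∈ antidiagonal (m + 1),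
        (rothePoly z w p.1).eval s * (rothePoly z w p.2).eval t
          - (rothePoly z w (m + 1)).eval (s + t) := by
      simp [Q, eval_finsetSum]
    have hper : Function.Periodic (fun s => Q.eval s) w := by
      intro s
      have := ih (s + z)
      rw [add_right_comm] at this
      simp only [hQ, Nat.sum_antidiagonal_succ, eval_rothePoly_zero, eval_rothePoly_add,
        add_right_comm s w t, add_mul, sum_add_distrib, mul_assoc, ← mul_sum, this]
      ring
    have hQ0 : Q.eval 0 = 0 := by
      simp [hQ, Nat.sum_antidiagonal_succ, eval_rothePoly_succ, eval_rothePoly_zero]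
    have := congrArg (eval s) (Polynomial.eq_C_eval_zero_of_periodic hper hw)
    rw [hQ, hQ0, eval_C] at this
    exact sub_eq_zero.mp this

end Rothe

noncomputable def lascoux (x : ℝ) (n : ℕ) : ℝ :=
  (1 / (Nat.factorial (n + 1) : ℝ)) *
    ∏ k ∈ range n, (((n : ℝ) + 1 + k) * x + ((n : ℝ) + 1 - k))

theorem eval_rothePoly_eq_lascoux (x : ℝ) (i : ℕ) :
    (rothePoly (2 * x) (x - 1) (i + 1)).eval (1 - x) = (1 - x) * lascoux x i := by
  have hprod : ∏ j ∈ range i, (1 - x + ((i + 1) * (2 * x) - (j + 1) * (x - 1)))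
      = ∏ k ∈ range i, (((i : ℝ) + 1 + k) * x + ((i : ℝ) + 1 - k)) := by
    rw [← prod_range_reflect (fun k : ℕ => ((i : ℝ) + 1 + k) * x + ((i : ℝ) + 1 - k)) i]
    refine prod_congr rfl fun j hj => ?_
    rw [Nat.sub_sub, Nat.cast_sub (by have := mem_range.mp hj; omega)]
    push_cast
    ring
  rw [eval_rothePoly_succ, hprod, lascoux]
  ring

theorem lascoux_succ_of_ne_one {x : ℝ} (hx : x ≠ 1) (n : ℕ) :
    (n + 1) * lascoux x (n + 1)
      = ((n + 1) * x + 1) * ∑ p ∈ antidiagonal n, lascoux x p.1 * lascoux x p.2 := by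
  have hu : 1 - x ≠ 0 := sub_ne_zero.mpr hx.symm
  have hconv := sum_antidiagonal_eval_rothePoly (2 * x) (x - 1) (sub_ne_zero.mpr hx)
    (n + 2) (1 - x) (1 - x)
  rw [Nat.sum_antidiagonal_succ, Nat.sum_antidiagonal_succ'] at hconv
  simp only [eval_rothePoly_zero, eval_rothePoly_eq_lascoux] at hconv
  have hshift := eval_rothePoly_sub_mul (2 * x) (x - 1) (n + 1) (1 - x)
  rw [show 1 - x - (x - 1) = 1 - x + (1 - x) by ring, eval_rothePoly_eq_lascoux] at hshift
  have hS : ∑ p ∈ antidiagonal n, (1 - x) * lascoux x p.1 * ((1 - x) * lascoux x p.2)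
      = (1 - x) ^ 2 * ∑ p ∈ antidiagonal n, lascoux x p.1 * lascoux x p.2 := by
    rw [mul_sum]; exact sum_congr rfl fun _ _ => by ring
  rw [hS] at hconv
  push_cast at hshift
  refine mul_left_cancel₀ (pow_ne_zero 3 hu) ?_
  linear_combination (-(1 - x) * ((n + 1) * x + 1)) * hconv + (1 / 2 : ℝ) * hshift

theorem lascoux_succ (x : ℝ) (n : ℕ) :
    lascoux x (n + 1)
      = (x + 1 / (n + 1)) * ∑ p ∈ antidiagonal n, lascoux x p.1 * lascoux x p.2 := by
  have h := Continuous.ext_on (dense_compl_singleton (1 : ℝ))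
    (f := fun x => (n + 1) * lascoux x (n + 1))
    (g := fun x => ((n + 1) * x + 1) * ∑ p ∈ antidiagonal n, lascoux x p.1 * lascoux x p.2)
    (by unfold lascoux; fun_prop) (by unfold lascoux; fun_prop)
    fun x hx => lascoux_succ_of_ne_one hx n
  have := congrFun h x
  field_simp
  linear_combination this

namespace BinTree

def ofBinaryTree : BinaryTree Unit → BinTree
  | .nil => nil
  | .node _ l r => node (ofBinaryTree l) (ofBinaryTree r)

def toBinaryTree : BinTree → BinaryTree Unit
  | nil => .nil
  | node l r => l.toBinaryTree △ r.toBinaryTree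

def equivBinaryTree : BinaryTree Unit ≃ BinTree where
  toFun := ofBinaryTree
  invFun := toBinaryTree
  left_inv t := by induction t <;> simp_all [ofBinaryTree, toBinaryTree]
  right_inv T := by induction T <;> simp_all [ofBinaryTree, toBinaryTree]

theorem size_ofBinaryTree (t : BinaryTree Unit) : (ofBinaryTree t).size = t.numNodes := by
  induction t <;> simp_all [ofBinaryTree, size]

theorem tsum_size_eq {R : Type*} [AddCommMonoid R] [TopologicalSpace R] (f : BinTree → R)
    (n : ℕ) : ∑' T : {T : BinTree // T.size = n}, f T
      = ∑ t ∈ treesOfNumNodesEq n, f (ofBinaryTree t) := by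
  let e : {t // t ∈ treesOfNumNodesEq n} ≃ {T : BinTree // T.size = n} :=
    equivBinaryTree.subtypeEquiv fun t => by
      simp [equivBinaryTree, size_ofBinaryTree]
  rw [← e.tsum_eq]
  exact Finset.tsum_subtype (treesOfNumNodesEq n) (fun t => f (ofBinaryTree t))

variable {R : Type*} [CommSemiring R] (φ : ℕ → R)

def hookSum (n : ℕ) : R :=
  ∑ t ∈ treesOfNumNodesEq n, ((ofBinaryTree t).hooks.map φ).prod

theorem hookSum_zero : hookSum φ 0 = 1 := by
  simp [hookSum, ofBinaryTree, hooks]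

theorem hookSum_succ (n : ℕ) :
    hookSum φ (n + 1)
      = φ (n + 1) * ∑ p ∈ antidiagonal n, hookSum φ p.1 * hookSum φ p.2 := by
  have hdisj : (antidiagonal n : Set (ℕ × ℕ)).PairwiseDisjoint fun p =>
      pairwiseNode (treesOfNumNodesEq p.1) (treesOfNumNodesEq p.2) := by
    simp_rw [Set.PairwiseDisjoint, Set.Pairwise, disjoint_left]
    aesop
  rw [hookSum, treesOfNumNodesEq_succ, sum_biUnion hdisj, mul_sum]
  refine sum_congr rfl fun p hp => ?_
  rw [sum_map, sum_product, hookSum, hookSum, sum_mul_sum, mul_sum]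
  refine sum_congr rfl fun l hl => ?_
  rw [mul_sum]
  refine sum_congr rfl fun r hr => ?_
  rw [mem_treesOfNumNodesEq] at hl hr
  rw [HasAntidiagonal.mem_antidiagonal] at hp
  change ((ofBinaryTree (l △ r)).hooks.map φ).prod = _
  simp [ofBinaryTree, hooks, size, size_ofBinaryTree, hl, hr, hp]

end BinTree

theorem hookSum_eq_lascoux (x : ℝ) (n : ℕ) :
    BinTree.hookSum (fun h : ℕ => x + 1 / (h : ℝ)) n = lascoux x n := by
  induction n using Nat.strong_induction_on with
  | _ n ih =>
    cases n with
    | zero => simp [BinTree.hookSum_zero, lascoux]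
    | succ n =>
      rw [BinTree.hookSum_succ, lascoux_succ]
      push_cast
      congr 1
      refine sum_congr rfl fun p hp => ?_
      have hp := HasAntidiagonal.mem_antidiagonal.mp hp
      rw [ih p.1 (by omega), ih p.2 (by omega)]

theorem lascoux_hook_length_general (n : ℕ) (x : ℝ) :
    ∑' T : {T : BinTree // T.size = n},
      ((T.1.hooks).map (fun h => x + 1 / h)).prod
      = (1 / (Nat.factorial (n + 1) : ℝ)) *
        ∏ k ∈ Finset.range n, (((n : ℝ) + 1 + k) * x + ((n : ℝ) + 1 - k)) := by
  -- the statement coerces the multiset of hooks to `Multiset ℝ` before mapping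
  let φ : ℕ → ℝ := fun h => x + 1 / (h : ℝ)
  calc _ = ∑' T : {T : BinTree // T.size = n}, (T.1.hooks.map φ).prod :=
        tsum_congr fun T => by simp [φ, Multiset.bind_singleton, Multiset.map_map]
    _ = lascoux x n :=
        (BinTree.tsum_size_eq (fun T => (T.hooks.map φ).prod) n).trans (hookSum_eq_lascoux x n)

/-- Lascoux's one-parameter generalization of Postnikov's hook length
formula, proved by Du and Liu. -/
theorem lascoux_hook_length (n : ℕ) (hn : 1 ≤ n) (x : ℝ) :
    ∑' T : {T : BinTree // T.size = n},
      ((T.1.hooks).map (fun h => x + 1 / h)).prod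
      = (1 / (Nat.factorial (n + 1) : ℝ)) *
        ∏ k ∈ Finset.range n, (((n : ℝ) + 1 + k) * x + ((n : ℝ) + 1 - k)) :=
  lascoux_hook_length_general n x
end

section
/- Abel's identity specialization: for every positive integer n, sum_{k=1}^{n-1} binom(n,k) * (k+z)^(k-1) * (n-k+z)^(n-k-1) = (2/z) * ((n+2z)^(n-1) - (n+z)^(n-1)), as an identity of rational functions (equivalently, z * sum_{k=1}^{n-1} binom(n,k) (k+z)^(k-1)(n-k+z)^(n-k-1) = 2(n+2z)^(n-1) - 2(n+z)^(n-1) as polynomials in z). -/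
/-!
The Abel polynomials `A₀ = 1`, `Aₙ(x) = x (x + n)ⁿ⁻¹` are of binomial type:
`Aₙ(x + y) = ∑ₖ (n choose k) Aₖ(x) Aₙ₋ₖ(y)`. By induction on `n`, as polynomials in `x` both
sides have the same derivative, because `A'ₙ₊₁(x) = (n + 1) Aₙ(x + 1)`, and the same value at
`x = 0`, because `Aₖ(0) = 0` for `k ≠ 0`. Taking `x = y = z`, the terms `k = 0` and `k = n`
each contribute `z (n + z)ⁿ⁻¹` and every other term carries a factor `z²`; dividing by `z`
gives the identity.
-/

open Polynomial Finset

theorem Polynomial.eq_of_derivative_eq_of_eval_zero_eq {R : Type*} [Ring R] [IsAddTorsionFree R]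
    {p q : R[X]} (hd : derivative p = derivative q) (h0 : p.eval 0 = q.eval 0) : p = q := by
  have hconst := eq_C_of_derivative_eq_zero (p := p - q) (by rw [derivative_sub, hd, sub_self])
  rw [coeff_zero_eq_eval_zero, eval_sub, h0, sub_self, C_0, sub_eq_zero] at hconst
  exact hconst

section Abel

variable {R : Type*} [CommRing R]

noncomputable def abelPoly : ℕ → R[X]
  | 0 => 1
  | n + 1 => X * (X + ((n + 1 : ℕ) : R[X])) ^ n

@[simp]
theorem abelPoly_zero : (abelPoly 0 : R[X]) = 1 := rfl

theorem eval_abelPoly_of_ne_zero {n : ℕ} (hn : n ≠ 0) (x : R) :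
    (abelPoly n).eval x = x * (x + n) ^ (n - 1) := by
  obtain ⟨m, rfl⟩ := Nat.exists_eq_succ_of_ne_zero hn
  simp [abelPoly]

theorem eval_zero_abelPoly (n : ℕ) : (abelPoly n : R[X]).eval 0 = if n = 0 then 1 else 0 := by
  cases n <;> simp [abelPoly]

theorem derivative_abelPoly_succ (n : ℕ) :
    derivative (abelPoly (n + 1) : R[X]) = (n + 1) • (abelPoly n).comp (X + 1) := by
  cases n with
  | zero => simp [abelPoly]
  | succ m =>
    simp only [abelPoly, derivative_mul, derivative_X, derivative_pow, derivative_add,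
      derivative_natCast, mul_comp, X_comp, pow_comp, add_comp, natCast_comp]
    simp only [nsmul_eq_mul, Nat.cast_add, Nat.cast_one, map_add, map_natCast, map_one,
      Nat.add_sub_cancel]
    ring

variable [IsAddTorsionFree R]

theorem abelPoly_comp_X_add_C (n : ℕ) (y : R) :
    (abelPoly n).comp (X + C y) =
      ∑ k ∈ range (n + 1), n.choose k • (abelPoly k * C ((abelPoly (n - k)).eval y)) := by
  induction n with
  | zero => simp
  | succ n ih =>
    apply eq_of_derivative_eq_of_eval_zero_eq
    · have hshift : (X + 1 : R[X]).comp (X + C y) = (X + C y).comp (X + 1) := by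
        simp only [add_comp, X_comp, one_comp, C_comp]
        ring
      rw [derivative_comp, derivative_X_add_C, one_mul, derivative_abelPoly_succ, smul_comp,
        comp_assoc, hshift, ← comp_assoc, ih, Polynomial.sum_comp, derivative_sum,
        sum_range_succ' _ (n + 1), smul_sum]
      simp only [derivative_smul, derivative_mul, derivative_C, mul_zero, add_zero,
        abelPoly_zero, derivative_one, zero_mul, smul_zero, derivative_abelPoly_succ, smul_comp,
        mul_comp, C_comp, Nat.succ_sub_succ, smul_mul_assoc, smul_smul]
      exact sum_congr rfl fun k _ => by rw [Nat.add_one_mul_choose_eq]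
    · simp only [eval_comp, eval_add, eval_X, eval_C, zero_add, eval_finsetSum, eval_smul,
        eval_mul, eval_zero_abelPoly]
      rw [sum_eq_single 0 (fun k _ hk => by simp [hk]) (by simp)]
      simp

theorem eval_add_abelPoly (n : ℕ) (x y : R) :
    (abelPoly n).eval (x + y) =
      ∑ k ∈ range (n + 1), n.choose k * (abelPoly k).eval x * (abelPoly (n - k)).eval y := by
  simpa [eval_finsetSum, mul_assoc, add_comm x] using congrArg (eval x) (abelPoly_comp_X_add_C n y)

theorem mul_mul_sum_Ico_abel_eq (n : ℕ) (x y : R) :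
    x * y * ∑ k ∈ Ico 1 n,
        (n.choose k : R) * ((k : R) + x) ^ (k - 1) * (((n - k : ℕ) : R) + y) ^ (n - k - 1) =
      (x + y) * ((n : R) + x + y) ^ (n - 1) - x * ((n : R) + x) ^ (n - 1) -
        y * ((n : R) + y) ^ (n - 1) := by
  rcases Nat.eq_zero_or_pos n with rfl | hn
  · simp
  have hinterior : ∑ k ∈ Ico 1 n, n.choose k * (abelPoly k).eval x * (abelPoly (n - k)).eval y =
      x * y * ∑ k ∈ Ico 1 n,
        (n.choose k : R) * ((k : R) + x) ^ (k - 1) * (((n - k : ℕ) : R) + y) ^ (n - k - 1) := by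
    rw [mul_sum]
    refine sum_congr rfl fun k hk => ?_
    rw [mem_Ico] at hk
    rw [eval_abelPoly_of_ne_zero (by omega), eval_abelPoly_of_ne_zero (by omega)]
    ring
  have h := eval_add_abelPoly n x y
  rw [range_eq_Ico, sum_eq_sum_Ico_succ_bot (by omega), sum_Ico_succ_top (by omega),
    hinterior] at h
  simp only [Nat.choose_zero_right, Nat.choose_self, Nat.sub_zero, Nat.sub_self, abelPoly_zero,
    eval_one, eval_abelPoly_of_ne_zero hn.ne'] at h
  linear_combination -h

end Abel

theorem abel_identity_general (n : ℕ) (z : ℝ) :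
    z * ∑ k ∈ Finset.Ico 1 n,
        (Nat.choose n k : ℝ) * ((k : ℝ) + z) ^ (k - 1) *
          (((n - k : ℕ) : ℝ) + z) ^ (n - k - 1)
      = 2 * ((n : ℝ) + 2 * z) ^ (n - 1) - 2 * ((n : ℝ) + z) ^ (n - 1) := by
  rcases eq_or_ne z 0 with rfl | hz
  · simp
  apply mul_left_cancel₀ hz
  linear_combination mul_mul_sum_Ico_abel_eq n z z

/-- An equivalent polynomial form of Lemma 3 (an instance of Abel's binomial
theorem): `z ∑_{k=1}^{n-1} binom(n,k) (k+z)^(k-1) (n-k+z)^(n-k-1)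
= 2(n+2z)^(n-1) - 2(n+z)^(n-1)`, for all real `z` (equivalently, as
polynomials in `z`). -/
theorem abel_identity (n : ℕ) (hn : 1 ≤ n) (z : ℝ) :
    z * ∑ k ∈ Finset.Ico 1 n,
        (Nat.choose n k : ℝ) * ((k : ℝ) + z) ^ (k - 1) *
          (((n - k : ℕ) : ℝ) + z) ^ (n - k - 1)
      = 2 * ((n : ℝ) + 2 * z) ^ (n - 1) - 2 * ((n : ℝ) + z) ^ (n - 1) :=
  abel_identity_general n z
end
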